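/- Let l be an even positive integer with l ≥ 4. Then the number of orbits of size exactly l of the shift map on 2-element subsets of ZMod l equals l/2 − 1, and there is exactly one orbit of size l/2 (namely the orbit of {0, l/2}). -/

import Mathlib

/-!
Every 2-subset `{a, b}` of `ZMod l` is a translate of `{0, d}` with `d = b - a ≠ 0`, and `{0, d}`,
`{0, e}` lie in one orbit iff `e = ± d`. The size of an orbit is the minimal period of the shift,
and shifting `{0, d}` by `z` fixes it iff `z = 0`, or `z = d` and `2 d = 0`. For `l = 2 h` the only
nonzero `d` with `2 d = 0` is `h`, whose orbit has size `h`; the other `l - 2` values of `d` give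
orbits of size `l`, each met by exactly the two values `± d`, hence `h - 1` such orbits.
-/

/-- The shift map on finsets of `ZMod m`. -/
def sh (m : ℕ) (A : Finset (ZMod m)) : Finset (ZMod m) := A.image (· + 1)

/-- The orbit of a finset `A` of `ZMod m` under the shift map (note `(sh m)^[m] = id`). -/
def shOrbit (m : ℕ) [NeZero m] (A : Finset (ZMod m)) : Finset (Finset (ZMod m)) :=
  (Finset.range m).image (fun i => (sh m)^[i] A)

/-- The number of orbits of size exactly `k` of the shift map on `d`-element subsets
of `ZMod m`. -/
def norb (m d k : ℕ) [NeZero m] : ℕ :=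
  (((Finset.univ.filter (fun A : Finset (ZMod m) => A.card = d)).image
      (shOrbit m)).filter (fun O => O.card = k)).card

open Finset Function

lemma Finset.pair_eq_pair_iff {α : Type*} [DecidableEq α] {a b c d : α} :
    ({a, b} : Finset α) = {c, d} ↔ a = c ∧ b = d ∨ a = d ∧ b = c := by
  rw [← coe_inj, coe_pair, coe_pair, Set.pair_eq_pair_iff]

theorem Function.IsPeriodicPt.card_image_range_iterate {α : Type*} [DecidableEq α]
    {f : α → α} {x : α} {n : ℕ} (hx : IsPeriodicPt f n x) (hn : 0 < n) :
    #((range n).image (f^[·] x)) = minimalPeriod f x := by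
  have hp := hx.minimalPeriod_pos hn
  have himage : (range n).image (f^[·] x) = (range (minimalPeriod f x)).image (f^[·] x) := by
    refine Subset.antisymm (fun y hy => ?_) (image_subset_image (range_subset_range.mpr
      (hx.minimalPeriod_le hn)))
    obtain ⟨i, -, rfl⟩ := mem_image.mp hy
    exact mem_image.mpr ⟨i % minimalPeriod f x, mem_range.mpr (Nat.mod_lt _ hp),
      iterate_mod_minimalPeriod_eq⟩
  rw [himage, card_image_of_injOn, card_range]
  intro i hi j hj
  exact iterate_injOn_Iio_minimalPeriod (by simpa using hi) (by simpa using hj)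

lemma Finset.card_eq_two_mul_card_image_of_fiber_eq_pair {α β : Type*} [DecidableEq α]
    [DecidableEq β] [InvolutiveNeg α] {s : Finset α} {f : α → β}
    (hneg : ∀ x ∈ s, -x ∈ s) (hne : ∀ x ∈ s, -x ≠ x)
    (hf : ∀ x ∈ s, ∀ y ∈ s, f x = f y ↔ y = x ∨ y = -x) :
    #s = 2 * #(s.image f) := by
  rw [card_eq_sum_card_image f s, mul_comm, ← smul_eq_mul, ← sum_const]
  refine sum_congr rfl fun b hb => ?_
  obtain ⟨x, hx, rfl⟩ := mem_image.mp hb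
  have hfiber : {y ∈ s | f y = f x} = {x, -x} := by
    ext y
    simp only [mem_filter, mem_insert, mem_singleton]
    constructor
    · rintro ⟨hy, hyx⟩
      exact (hf x hx y hy).mp hyx.symm
    · rintro (rfl | rfl)
      exacts [⟨hx, rfl⟩, ⟨hneg x hx, ((hf x hx _ (hneg x hx)).mpr (Or.inr rfl)).symm⟩]
  rw [hfiber, card_pair (hne x hx).symm]

lemma ZMod.natCast_half_ne_zero (h : ℕ) [NeZero h] : (h : ZMod (h + h)) ≠ 0 := by
  rw [Ne, ZMod.natCast_eq_zero_iff]
  exact fun hdvd => NeZero.ne h (Nat.eq_zero_of_dvd_of_lt hdvd (by grind [NeZero.pos h]))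

lemma ZMod.add_self_eq_zero_iff {h : ℕ} [NeZero h] (x : ZMod (h + h)) :
    x + x = 0 ↔ x = 0 ∨ x = h := by
  rw [← neg_eq_iff_add_eq_zero, ZMod.neg_eq_self_iff]
  have hval : (h : ZMod (h + h)).val = h := ZMod.val_cast_of_lt (by grind [NeZero.pos h])
  rw [← (ZMod.val_injective _).eq_iff (b := (h : ZMod (h + h))), hval]
  exact or_congr_right (by omega)

section Shift

variable {m : ℕ}

lemma sh_iterate (n : ℕ) (A : Finset (ZMod m)) : (sh m)^[n] A = A.image (· + (n : ZMod m)) := by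
  induction n with
  | zero => simp
  | succ n ih =>
    rw [iterate_succ_apply', ih, sh, image_image]
    congr 1
    funext x
    simp [add_assoc]

lemma isPeriodicPt_sh (A : Finset (ZMod m)) : IsPeriodicPt (sh m) m A := by
  simp [IsPeriodicPt, IsFixedPt, sh_iterate]

lemma card_shOrbit [NeZero m] (A : Finset (ZMod m)) : #(shOrbit m A) = minimalPeriod (sh m) A :=
  (isPeriodicPt_sh A).card_image_range_iterate (NeZero.pos m)

lemma mem_shOrbit [NeZero m] {A B : Finset (ZMod m)} :
    B ∈ shOrbit m A ↔ ∃ z : ZMod m, A.image (· + z) = B := by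
  simp only [shOrbit, mem_image, mem_range, sh_iterate]
  constructor
  · rintro ⟨n, -, rfl⟩
    exact ⟨n, rfl⟩
  · rintro ⟨z, rfl⟩
    exact ⟨z.val, z.val_lt, by rw [ZMod.natCast_zmod_val]⟩

lemma image_add_image_add (A : Finset (ZMod m)) (z w : ZMod m) :
    (A.image (· + z)).image (· + w) = A.image (· + (z + w)) := by
  rw [image_image]
  congr 1
  funext x
  simp [add_assoc]

lemma shOrbit_image_add [NeZero m] (A : Finset (ZMod m)) (z : ZMod m) :
    shOrbit m (A.image (· + z)) = shOrbit m A := by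
  ext B
  simp only [mem_shOrbit, image_add_image_add]
  constructor
  · rintro ⟨w, rfl⟩
    exact ⟨z + w, rfl⟩
  · rintro ⟨w, rfl⟩
    exact ⟨w - z, by rw [add_sub_cancel]⟩

lemma image_add_pair (a b z : ZMod m) :
    ({a, b} : Finset (ZMod m)).image (· + z) = {a + z, b + z} := by
  simp [image_insert]

lemma shOrbit_pair [NeZero m] (a b : ZMod m) : shOrbit m {a, b} = shOrbit m {0, b - a} := by
  rw [← shOrbit_image_add {0, b - a} a, image_add_pair, zero_add, sub_add_cancel]

lemma shOrbit_pair_zero_eq_iff [NeZero m] {d e : ZMod m} :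
    shOrbit m {0, d} = shOrbit m {0, e} ↔ e = d ∨ e = -d := by
  constructor
  · intro hde
    have : ({0, e} : Finset (ZMod m)) ∈ shOrbit m {0, d} :=
      hde ▸ mem_shOrbit.mpr ⟨0, by simp⟩
    obtain ⟨z, hz⟩ := mem_shOrbit.mp this
    rw [image_add_pair, zero_add, pair_eq_pair_iff] at hz
    rcases hz with ⟨rfl, hd⟩ | ⟨rfl, hd⟩
    · exact Or.inl (by rw [← hd, add_zero])
    · exact Or.inr (eq_neg_of_add_eq_zero_right hd)
  · rintro (rfl | rfl)
    · rfl
    · rw [← shOrbit_image_add _ (-d), image_add_pair, zero_add, add_neg_cancel, pair_comm]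

lemma image_add_pair_zero_eq_self_iff (d z : ZMod m) :
    ({0, d} : Finset (ZMod m)).image (· + z) = {0, d} ↔ z = 0 ∨ z = d ∧ d + d = 0 := by
  rw [image_add_pair, zero_add, pair_eq_pair_iff]
  constructor
  · rintro (⟨rfl, -⟩ | ⟨rfl, hd⟩)
    exacts [Or.inl rfl, Or.inr ⟨rfl, hd⟩]
  · rintro (rfl | ⟨rfl, hd⟩)
    exacts [Or.inl ⟨rfl, add_zero d⟩, Or.inr ⟨rfl, hd⟩]

lemma isPeriodicPt_sh_pair_zero_iff (d : ZMod m) (n : ℕ) :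
    IsPeriodicPt (sh m) n {0, d} ↔ (n : ZMod m) = 0 ∨ (n : ZMod m) = d ∧ d + d = 0 := by
  rw [IsPeriodicPt, IsFixedPt, sh_iterate, image_add_pair_zero_eq_self_iff]

lemma minimalPeriod_sh_pair_zero {d : ZMod m} (hd : d + d ≠ 0) :
    minimalPeriod (sh m) {0, d} = m := by
  have hper := (isPeriodicPt_sh_pair_zero_iff d _).mp (isPeriodicPt_minimalPeriod (sh m) {0, d})
  refine Nat.dvd_antisymm (isPeriodicPt_sh _).minimalPeriod_dvd ?_
  exact (ZMod.natCast_eq_zero_iff _ _).mp (hper.resolve_right fun h => hd h.2)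

lemma minimalPeriod_sh_pair_zero_half (h : ℕ) [NeZero h] :
    minimalPeriod (sh (h + h)) {0, (h : ZMod (h + h))} = h := by
  set p := minimalPeriod (sh (h + h)) {0, (h : ZMod (h + h))}
  have hper := (isPeriodicPt_sh_pair_zero_iff _ p).mp (isPeriodicPt_minimalPeriod _ _)
  have h2p : ((p + p : ℕ) : ZMod (h + h)) = 0 := by
    rw [Nat.cast_add, ZMod.add_self_eq_zero_iff]
    exact hper.imp_right And.left
  have hhp : h ∣ p := by
    rw [ZMod.natCast_eq_zero_iff, ← two_mul, ← two_mul] at h2p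
    exact (Nat.mul_dvd_mul_iff_left two_pos).mp h2p
  refine Nat.dvd_antisymm (IsPeriodicPt.minimalPeriod_dvd ?_) hhp
  rw [isPeriodicPt_sh_pair_zero_iff]
  exact Or.inr ⟨rfl, by rw [← Nat.cast_add, ZMod.natCast_self]⟩

lemma image_shOrbit_card_two [NeZero m] :
    ({A : Finset (ZMod m) | #A = 2} : Finset _).image (shOrbit m) =
      ({d : ZMod m | d ≠ 0} : Finset _).image (fun d => shOrbit m {0, d}) := by
  ext O
  simp only [mem_image, mem_filter, mem_univ, true_and]
  constructor
  · rintro ⟨A, hA, rfl⟩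
    obtain ⟨a, b, hab, rfl⟩ := card_eq_two.mp hA
    exact ⟨b - a, sub_ne_zero.mpr hab.symm, (shOrbit_pair a b).symm⟩
  · rintro ⟨d, hd, rfl⟩
    exact ⟨{0, d}, card_pair hd.symm, rfl⟩

end Shift

section Counting

variable (h : ℕ) [NeZero h]

lemma card_shOrbit_pair_zero {d : ZMod (h + h)} (hd : d ≠ 0) :
    #(shOrbit (h + h) {0, d}) = if d = h then h else h + h := by
  rw [card_shOrbit]
  split_ifs with hdh
  · rw [hdh, minimalPeriod_sh_pair_zero_half]
  · exact minimalPeriod_sh_pair_zero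
      ((ZMod.add_self_eq_zero_iff d).not.mpr (not_or.mpr ⟨hd, hdh⟩))

lemma card_filter_add_self_ne_zero :
    #({d : ZMod (h + h) | d + d ≠ 0} : Finset _) = h + h - 2 := by
  have htwo : ({d : ZMod (h + h) | d + d = 0} : Finset _) = {0, (h : ZMod (h + h))} := by
    ext d
    simp [ZMod.add_self_eq_zero_iff]
  rw [filter_not, card_sdiff_of_subset (subset_univ _), htwo,
    card_pair (ZMod.natCast_half_ne_zero h).symm, card_univ, ZMod.card]

lemma norb_two_self : norb (h + h) 2 (h + h) = h - 1 := by
  set S : Finset (ZMod (h + h)) := {d | d + d ≠ 0}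
  have hS : norb (h + h) 2 (h + h) = #(S.image fun d => shOrbit (h + h) {0, d}) := by
    rw [norb, image_shOrbit_card_two, filter_image, filter_filter]
    congr 2
    ext d
    simp only [mem_filter, mem_univ, true_and, S]
    by_cases hd : d = 0
    · simp [hd]
    have hh0 := NeZero.ne h
    simp only [card_shOrbit_pair_zero h hd, ne_eq, ZMod.add_self_eq_zero_iff]
    split_ifs <;> simp_all
  have hcount : #S = 2 * #(S.image fun d => shOrbit (h + h) {0, d}) := by
    refine card_eq_two_mul_card_image_of_fiber_eq_pair ?_ ?_
      fun x _ y _ => shOrbit_pair_zero_eq_iff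
    · simp only [S, mem_filter, mem_univ, true_and]
      intro x hx
      rwa [← neg_add, neg_ne_zero]
    · simp only [S, mem_filter, mem_univ, true_and]
      exact fun x hx => neg_eq_iff_add_eq_zero.not.mpr hx
  rw [card_filter_add_self_ne_zero] at hcount
  omega

lemma norb_two_half : norb (h + h) 2 h = 1 := by
  have hhalf : ({d : ZMod (h + h) | d ≠ 0 ∧ #(shOrbit (h + h) {0, d}) = h} : Finset _) =
      {(h : ZMod (h + h))} := by
    ext d
    simp only [mem_filter, mem_univ, true_and, mem_singleton]
    by_cases hd : d = 0
    · simp [hd, (ZMod.natCast_half_ne_zero h).symm]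
    have hh0 := NeZero.ne h
    rw [card_shOrbit_pair_zero h hd]
    split_ifs <;> simp_all
  rw [norb, image_shOrbit_card_two, filter_image, filter_filter, hhalf, image_singleton,
    card_singleton]

end Counting

theorem norb_two_even_general (l : ℕ) [NeZero l] (heven : Even l) :
    norb l 2 l = l / 2 - 1 ∧ norb l 2 (l / 2) = 1 ∧
    Function.minimalPeriod (sh l) ({0, ((l / 2 : ℕ) : ZMod l)} : Finset (ZMod l))
      = l / 2 := by
  obtain ⟨h, rfl⟩ := heven
  have : NeZero h := ⟨by rintro rfl; exact NeZero.ne (0 + 0) rfl⟩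
  rw [show (h + h) / 2 = h by omega]
  exact ⟨norb_two_self h, norb_two_half h, minimalPeriod_sh_pair_zero_half h⟩

/-- For even `l ≥ 4`, there are `l/2 − 1` orbits of size exactly `l` on 2-element
subsets of `ZMod l`, and exactly one orbit of size `l/2`, namely that of `{0, l/2}`. -/
theorem norb_two_even (l : ℕ) [NeZero l] (hl : 4 ≤ l) (heven : Even l) :
    norb l 2 l = l / 2 - 1 ∧ norb l 2 (l / 2) = 1 ∧
    Function.minimalPeriod (sh l) ({0, ((l / 2 : ℕ) : ZMod l)} : Finset (ZMod l))
      = l / 2 :=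
  norb_two_even_general l heven
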